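/- Let R be a commutative ring and λ : R → S an injective ring epimorphism. If there exist sets X, Y and R-module epimorphisms S^{(X)} → D and D^{(Y)} → S for some R-module D, then the resulting epimorphism S^{(X×Y)} → S splits as a map of R-modules; consequently if D has projective dimension ≤ 1 then pd_R S ≤ 1. -/

import Mathlib

universe u

/-- `ProjDimLE1 R M` : `M` has projective dimension at most `1`, i.e. `M` is a
quotient of a free module by a projective submodule. -/
def ProjDimLE1 (R : Type u) [Ring R] (M : Type u) [AddCommGroup M]
    [Module R M] : Prop :=
  ∃ (κ : Type u) (K : Submodule R (κ →₀ R)),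
    Module.Projective R ↥K ∧ Nonempty (((κ →₀ R) ⧸ K) ≃ₗ[R] M)

/-!
Since `R → S` is a ring epimorphism, `s ⊗ m = 1 ⊗ s • m` in `S ⊗[R] M` for every `S`-module `M`,
so every `R`-linear map between `S`-modules is `S`-linear. The composite `S^{(X×Y)} → S` is
therefore an `S`-linear surjection onto the free `S`-module `S`, and it splits. This makes `S` a
direct summand of `D^{(Y)}`. By Schanuel's lemma, `pd M ≤ 1` means that the kernel of *every*
surjection from a projective module onto `M` is projective; in this form it passes from `D` to
`D^{(Y)}` (the kernel of a direct sum of covers is the direct sum of the kernels) and then to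
the direct summand `S` (the kernel of a cover of `S` is a direct summand of the kernel of a
cover of `D^{(Y)}`).
-/

open Function LinearMap

theorem Algebra.isEpi_of_forall_ringHom_ext {R S : Type u} [CommRing R] [CommRing S] [Algebra R S]
    (hepi : ∀ (T : Type u) [CommRing T] (g h : S →+* T),
      g.comp (algebraMap R S) = h.comp (algebraMap R S) → g = h) :
    Algebra.IsEpi R S :=
  CommRingCat.epi_iff_epi.mp
    ⟨fun g h e => CommRingCat.hom_ext (hepi _ g.hom h.hom (congrArg CommRingCat.Hom.hom e))⟩

section IsEpi

variable {R S : Type*} [CommRing R] [CommRing S] [Algebra R S] [Algebra.IsEpi R S]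
  {M N : Type*} [AddCommGroup M] [Module R M] [Module S M] [IsScalarTower R S M]
  [AddCommGroup N] [Module R N] [Module S N] [IsScalarTower R S N]

theorem LinearMap.map_smul_of_isEpi (f : M →ₗ[R] N) (s : S) (m : M) :
    f (s • m) = s • f m := by
  have h : s ⊗ₜ[R] m = (1 : S) ⊗ₜ[R] (s • m) :=
    (TensorProduct.lid' R S M).injective (by simp)
  simpa using (congrArg (TensorProduct.lid' R S N ∘ f.lTensor S) h).symm

theorem LinearMap.exists_rightInverse_of_surjective_of_isEpi (π : M →ₗ[R] S)
    (hπ : Surjective π) : ∃ σ : S →ₗ[R] M, π ∘ₗ σ = .id := by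
  obtain ⟨z, hz⟩ := hπ 1
  refine ⟨(toSpanSingleton S M z).restrictScalars R, LinearMap.ext fun s => ?_⟩
  simp [π.map_smul_of_isEpi, hz]

end IsEpi

namespace Module

variable {R : Type*} [Ring R]

theorem Projective.finsupp {P : Type*} [AddCommGroup P] [Module R P] [Projective R P]
    (Y : Type*) : Projective R (Y →₀ P) := by
  classical
  exact .of_equiv (finsuppLequivDFinsupp R).symm

theorem Projective.iff_of_exact {K M P : Type*} [AddCommGroup K] [AddCommGroup M]
    [AddCommGroup P] [Module R K] [Module R M] [Module R P] [Projective R P]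
    {i : K →ₗ[R] M} {f : M →ₗ[R] P} (hexact : Exact i f) (hi : Function.Injective i)
    (hf : Surjective f) : Projective R M ↔ Projective R K := by
  obtain ⟨l, hl⟩ := f.exists_rightInverse_of_surjective (range_eq_top.2 hf)
  let e : M ≃ₗ[R] K × P := (hexact.splitSurjectiveEquiv hi ⟨l, hl⟩).1
  refine ⟨fun _ => ?_, fun _ => .of_equiv e.symm⟩
  have := Projective.of_equiv e
  exact .of_split (inl R K P) (fst R K P) (fst_comp_inl R K P)

theorem projective_ker_coprod_iff {A₁ A₂ N : Type*} [AddCommGroup A₁] [AddCommGroup A₂]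
    [AddCommGroup N] [Module R A₁] [Module R A₂] [Module R N] [Projective R A₂]
    {g₁ : A₁ →ₗ[R] N} (h₁ : Surjective g₁) (g₂ : A₂ →ₗ[R] N) :
    Projective R (ker (g₁.coprod g₂)) ↔ Projective R (ker g₁) := by
  set P := ker (g₁.coprod g₂)
  have hP : ∀ x : A₁ × A₂, x ∈ P ↔ g₁ x.1 + g₂ x.2 = 0 := fun _ => Iff.rfl
  refine Projective.iff_of_exact (i := codRestrict P (inl R A₁ A₂ ∘ₗ (ker g₁).subtype)
    fun a => by simp [hP]) (f := snd R A₁ A₂ ∘ₗ P.subtype) ?_ ?_ ?_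
  · intro y
    constructor
    · intro hy
      replace hy : (y : A₁ × A₂).2 = 0 := hy
      exact ⟨⟨_, by simpa [hP, hy] using y.2⟩, Subtype.ext (Prod.ext rfl hy.symm)⟩
    · rintro ⟨a, rfl⟩
      rfl
  · intro a a' h
    exact Subtype.ext (congrArg (fun x : P => (x : A₁ × A₂).1) h)
  · intro b
    obtain ⟨a, ha⟩ := h₁ (-g₂ b)
    exact ⟨⟨(a, b), by simp [hP, ha]⟩, rfl⟩

theorem projective_ker_iff_of_surjective {A₁ A₂ N : Type*} [AddCommGroup A₁] [AddCommGroup A₂]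
    [AddCommGroup N] [Module R A₁] [Module R A₂] [Module R N]
    [Projective R A₁] [Projective R A₂] {g₁ : A₁ →ₗ[R] N} {g₂ : A₂ →ₗ[R] N}
    (h₁ : Surjective g₁) (h₂ : Surjective g₂) :
    Projective R (ker g₁) ↔ Projective R (ker g₂) := by
  let swap : ker (g₁.coprod g₂) ≃ₗ[R] ker (g₂.coprod g₁) :=
    .ofSubmodules (.prodComm R A₁ A₂) _ _ (by ext; simp [add_comm])
  rw [← projective_ker_coprod_iff h₁ g₂, ← projective_ker_coprod_iff h₂ g₁]
  exact ⟨fun _ => .of_equiv swap, fun _ => .of_equiv swap.symm⟩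

end Module

open Module

noncomputable def Finsupp.kerMapRangeEquiv {R M N : Type*} [Ring R] [AddCommGroup M] [Module R M]
    [AddCommGroup N] [Module R N] (f : M →ₗ[R] N) (Y : Type*) :
    (Y →₀ ker f) ≃ₗ[R] ker (Finsupp.mapRange.linearMap (α := Y) f) :=
  (LinearEquiv.ofInjective (Finsupp.mapRange.linearMap (ker f).subtype)
    (Finsupp.mapRange_injective _ rfl Subtype.val_injective)).trans
    (.ofEq _ _ (by rw [Finsupp.ker_mapRange,
      Finsupp.range_mapRange_linearMap _ (Submodule.ker_subtype _), Submodule.range_subtype]))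

section ProjDimLE1

variable {R : Type u} [Ring R] {M N : Type u} [AddCommGroup M] [Module R M]
  [AddCommGroup N] [Module R N]

theorem ProjDimLE1.projective_ker (hM : ProjDimLE1 R M) {A : Type*} [AddCommGroup A]
    [Module R A] [Projective R A] {g : A →ₗ[R] M} (hg : Surjective g) :
    Projective R (ker g) := by
  obtain ⟨κ, K, hK, ⟨e⟩⟩ := hM
  have hker : ker (e.toLinearMap ∘ₗ K.mkQ) = K := by
    rw [ker_comp, LinearEquiv.ker, Submodule.comap_bot, Submodule.ker_mkQ]
  exact (projective_ker_iff_of_surjective (g₁ := e.toLinearMap ∘ₗ K.mkQ)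
    (e.surjective.comp K.mkQ_surjective) hg).1 (.of_equiv (LinearEquiv.ofEq _ _ hker.symm))

theorem projDimLE1_of_projective_ker {A : Type*} [AddCommGroup A] [Module R A]
    [Projective R A] {g : A →ₗ[R] M} (hg : Surjective g) (hker : Projective R (ker g)) :
    ProjDimLE1 R M := by
  have hq := Finsupp.linearCombination_id_surjective R M
  exact ⟨M, ker (Finsupp.linearCombination R id), (projective_ker_iff_of_surjective hg hq).1 hker,
    ⟨quotKerEquivOfSurjective _ hq⟩⟩

theorem ProjDimLE1.finsupp (hM : ProjDimLE1 R M) (Y : Type u) : ProjDimLE1 R (Y →₀ M) := by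
  let q := Finsupp.linearCombination R (id : M → M)
  have hq : Surjective q := Finsupp.linearCombination_id_surjective R M
  have := hM.projective_ker hq
  have := Projective.finsupp (R := R) (P := ker q) Y
  have hqY : Surjective (Finsupp.mapRange.linearMap (α := Y) q) :=
    Finsupp.mapRange_surjective q (map_zero q) hq
  exact projDimLE1_of_projective_ker hqY (.of_equiv (Finsupp.kerMapRangeEquiv q Y))

theorem ProjDimLE1.of_retract (hM : ProjDimLE1 R M) (i : N →ₗ[R] M) (p : M →ₗ[R] N)
    (hpi : p ∘ₗ i = .id) : ProjDimLE1 R N := by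
  have hpi' : ∀ n, p (i n) = n := LinearMap.congr_fun hpi
  let qN := Finsupp.linearCombination R (id : N → N)
  let qL := Finsupp.linearCombination R (id : ker p → ker p)
  let c := (i ∘ₗ qN).coprod ((ker p).subtype ∘ₗ qL)
  have hc : Surjective c := by
    intro m
    have hm : m - i (p m) ∈ ker p := by simp [hpi']
    obtain ⟨a, ha⟩ := Finsupp.linearCombination_id_surjective R N (p m)
    obtain ⟨b, hb⟩ := Finsupp.linearCombination_id_surjective R (ker p) ⟨_, hm⟩
    exact ⟨(a, b), by simp [c, qN, qL, ha, hb]⟩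
  have hker : ∀ x ∈ ker c, qN x.1 = 0 := fun x hx => by
    simpa [c, hpi'] using congrArg p hx
  have := hM.projective_ker hc
  have : Projective R (ker qN) :=
    .of_split (codRestrict _ (inl _ _ _ ∘ₗ (ker qN).subtype) fun y => by simp [c])
      (codRestrict _ (fst _ _ _ ∘ₗ (ker c).subtype) fun x => hker x x.2) rfl
  exact projDimLE1_of_projective_ker (Finsupp.linearCombination_id_surjective R N) this

end ProjDimLE1

theorem split_epi_from_sums_and_pd_general (R : Type u) [CommRing R]
    (S : Type u) [CommRing S] [Algebra R S]
    (hepi : ∀ (T : Type u) [CommRing T] (g h : S →+* T),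
      g.comp (algebraMap R S) = h.comp (algebraMap R S) → g = h)
    (X Y : Type u) (D : Type u) [AddCommGroup D] [Module R D]
    (φ : (X →₀ S) →ₗ[R] D) (hφ : Function.Surjective φ)
    (ψ : (Y →₀ D) →ₗ[R] S) (hψ : Function.Surjective ψ) :
    (∃ σ : S →ₗ[R] (Y →₀ (X →₀ S)),
      (ψ ∘ₗ Finsupp.mapRange.linearMap φ) ∘ₗ σ = LinearMap.id) ∧
    (ProjDimLE1 R D → ProjDimLE1 R S) := by
  have := Algebra.isEpi_of_forall_ringHom_ext hepi
  have hπ : Surjective (ψ ∘ₗ Finsupp.mapRange.linearMap φ) :=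
    hψ.comp (Finsupp.mapRange_surjective φ (map_zero φ) hφ)
  obtain ⟨σ, hσ⟩ := exists_rightInverse_of_surjective_of_isEpi (M := Y →₀ X →₀ S) _ hπ
  exact ⟨⟨σ, hσ⟩, fun hD => (hD.finsupp Y).of_retract (Finsupp.mapRange.linearMap φ ∘ₗ σ) ψ hσ⟩

/-- Let `R` be a commutative ring and `λ : R → S` an injective
ring epimorphism.  If there are sets `X`, `Y`, an `R`-module `D`, and
`R`-module epimorphisms `S^{(X)} → D` and `D^{(Y)} → S`, then the resulting
epimorphism `S^{(X×Y)} → S` (realized on `Y →₀ (X →₀ S) ≅ S^{(X×Y)}`) splits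
as a map of `R`-modules; consequently, if `D` has projective dimension at
most `1`, then `pd_R S ≤ 1`. -/
theorem split_epi_from_sums_and_pd (R : Type u) [CommRing R]
    (S : Type u) [CommRing S] [Algebra R S]
    (hepi : ∀ (T : Type u) [CommRing T] (g h : S →+* T),
      g.comp (algebraMap R S) = h.comp (algebraMap R S) → g = h)
    (hinj : Function.Injective (algebraMap R S))
    (X Y : Type u) (D : Type u) [AddCommGroup D] [Module R D]
    (φ : (X →₀ S) →ₗ[R] D) (hφ : Function.Surjective φ)
    (ψ : (Y →₀ D) →ₗ[R] S) (hψ : Function.Surjective ψ) :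
    (∃ σ : S →ₗ[R] (Y →₀ (X →₀ S)),
      (ψ ∘ₗ Finsupp.mapRange.linearMap φ) ∘ₗ σ = LinearMap.id) ∧
    (ProjDimLE1 R D → ProjDimLE1 R S) :=
  split_epi_from_sums_and_pd_general R S hepi X Y D φ hφ ψ hψ
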